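/- For all real numbers p, q, r, s, the system −6q + 7p² + q² = −6s + 7r² + s², 7q + 9p² − q² = 7s + 9r² − s², p² + q² = 1, r² + s² = 1, together with (p,q) ≠ (r,s), holds if and only if r = −p, s = q, p² + q² = 1 and p ≠ 0. In particular, the system has infinitely many solutions (p,q,r,s). -/
import Mathlib


/-- The closing-equation system for `X = (-6 + 2y, -14x)`, `Y = (7 - 2y, -18x)`. -/
def closingSys15 (p q r s : ℝ) : Prop :=
  -6 * q + 7 * p ^ 2 + q ^ 2 = -6 * s + 7 * r ^ 2 + s ^ 2 ∧
    7 * q + 9 * p ^ 2 - q ^ 2 = 7 * s + 9 * r ^ 2 - s ^ 2 ∧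
    p ^ 2 + q ^ 2 = 1 ∧ r ^ 2 + s ^ 2 = 1 ∧ (p, q) ≠ (r, s)

/-- The system holds iff `r = -p`, `s = q`, `p² + q² = 1` and `p ≠ 0`; in particular it has
infinitely many solutions. -/
theorem closingSys15_iff_and_infinite :
    (∀ p q r s : ℝ,
      closingSys15 p q r s ↔ (r = -p ∧ s = q ∧ p ^ 2 + q ^ 2 = 1 ∧ p ≠ 0)) ∧
    {x : ℝ × ℝ × ℝ × ℝ | closingSys15 x.1 x.2.1 x.2.2.1 x.2.2.2}.Infinite := by
  have key : ∀ p q r s : ℝ,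
      closingSys15 p q r s ↔ (r = -p ∧ s = q ∧ p ^ 2 + q ^ 2 = 1 ∧ p ≠ 0) := by
    intro p q r s
    constructor
    · rintro ⟨h1, h2, h3, h4, h5⟩
      have e1 : (q - s) * (q + s + 1) = 0 := by
        linear_combination (-1/6 : ℝ) * h1 + (7/6 : ℝ) * h3 - (7/6 : ℝ) * h4
      have e2 : (q - s) * (7 - 10 * (q + s)) = 0 := by
        linear_combination h2 - 9 * h3 + 9 * h4
      have hqs : q = s := by
        by_contra h
        have hq : q - s ≠ 0 := sub_ne_zero.mpr h
        have c1 : q + s + 1 = 0 := by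
          rcases mul_eq_zero.mp e1 with h' | h'
          · exact absurd h' hq
          · exact h'
        have c2 : 7 - 10 * (q + s) = 0 := by
          rcases mul_eq_zero.mp e2 with h' | h'
          · exact absurd h' hq
          · exact h'
        linarith
      subst hqs
      have hpr : (p - r) * (p + r) = 0 := by linear_combination h3 - h4
      have hr : r = -p := by
        rcases mul_eq_zero.mp hpr with h' | h'
        · have hp : p = r := by linarith
          exact absurd (by rw [hp]) h5
        · linarith
      refine ⟨hr, rfl, h3, ?_⟩
      intro hp
      exact h5 (by rw [hr, hp, neg_zero])
    · rintro ⟨rfl, rfl, h3, hp⟩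
      refine ⟨by ring, by ring, h3, by linear_combination h3, ?_⟩
      intro h
      have := (Prod.mk.injEq _ _ _ _).mp h
      have : p = -p := this.1
      exact hp (by linarith)
  refine ⟨key, ?_⟩
  have hsub : (fun t : ℝ => (t, Real.sqrt (1 - t ^ 2), -t, Real.sqrt (1 - t ^ 2))) ''
      Set.Ioo 0 1 ⊆ {x : ℝ × ℝ × ℝ × ℝ | closingSys15 x.1 x.2.1 x.2.2.1 x.2.2.2} := by
    rintro _ ⟨t, ⟨ht0, ht1⟩, rfl⟩
    simp only [Set.mem_setOf_eq]
    rw [key]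
    refine ⟨rfl, rfl, ?_, ne_of_gt ht0⟩
    rw [Real.sq_sqrt (by nlinarith)]
    ring
  refine Set.Infinite.mono hsub ?_
  exact Set.Infinite.image
    (fun a _ b _ h => (Prod.mk.injEq _ _ _ _).mp h |>.1)
    (Set.Ioo_infinite (by norm_num : (0:ℝ) < 1))
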